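/- If f : ℝ → ℝ is (1,[0,1])-triangle, then for every positive integer k, the k-fold composition f^k = f ∘ f ∘ ⋯ ∘ f is (2^{k−1},[0,1])-triangle. -/
import Mathlib


open MeasureTheory
open scoped ENNReal

noncomputable section

/-- `f` is `(t,[0,1])`-triangle (0-indexed breakpoints `a 0 < ⋯ < a (2t)`). -/
def IsTriangle (f : ℝ → ℝ) (t : ℕ) : Prop :=
  0 < t ∧ ContinuousOn f (Set.Icc 0 1) ∧
  ∃ a : ℕ → ℝ, a 0 = 0 ∧ a (2*t) = 1 ∧
    (∀ i j, i < j → j ≤ 2*t → a i < a j) ∧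
    (∀ i, i + 2 ≤ 2*t → f (a i) = f (a (i+2))) ∧
    f (a 0) = 0 ∧ f (a 1) = 1 ∧
    (∀ i, i < 2*t →
      (Even i → StrictMonoOn f (Set.Icc (a i) (a (i+1)))) ∧
      (Odd i → StrictAntiOn f (Set.Icc (a i) (a (i+1)))))

lemma triangle_chain {A : ℕ → ℝ} {N : ℕ} (h : ∀ n, n < N → A n < A (n+1)) :
    ∀ i j, i < j → j ≤ N → A i < A j := by
  intro i j hij hjN
  induction j with
  | zero => omega
  | succ j ih =>
    rcases Nat.lt_succ_iff_lt_or_eq.mp hij with h' | h'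
    · exact (ih h' (by omega)).trans (h j (by omega))
    · subst h'; exact h i (by omega)

lemma triangle_comp {f g : ℝ → ℝ} {t : ℕ} (hf : IsTriangle f 1) (hg : IsTriangle g t) :
    IsTriangle (f ∘ g) (2 * t) := by
  classical
  obtain ⟨-, fcont, p, hp0, hp2, pmono, fper, hf0, hfb, fmono0⟩ := hf
  obtain ⟨ht, gcont, a, ha0, ha1, amono, gper, hg0, hg1, gmono0⟩ := hg
  set b : ℝ := p 1 with hbdef
  have hp2' : p 2 = 1 := by simpa using hp2
  have hb0 : 0 < b := by
    have := pmono 0 1 (by omega) (by omega); rwa [hp0] at this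
  have hb1 : b < 1 := by
    have := pmono 1 2 (by omega) (by omega); rwa [hp2'] at this
  have hf00 : f 0 = 0 := by rwa [hp0] at hf0
  have hf10 : f 1 = 0 := by
    have h := fper 0 (by omega)
    rw [hp0, hp2'] at h
    rw [← h, hf00]
  have fmono : StrictMonoOn f (Set.Icc 0 b) := by
    have := (fmono0 0 (by omega)).1 Even.zero
    rwa [hp0] at this
  have fanti : StrictAntiOn f (Set.Icc b 1) := by
    have := (fmono0 1 (by omega)).2 odd_one
    rwa [hp2'] at this
  -- value of f at points which are 0 or 1
  have fzero : ∀ y : ℝ, y = 0 ∨ y = 1 → f y = 0 := by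
    rintro y (rfl | rfl)
    · exact hf00
    · exact hf10
  -- monotone (≤) version of amono
  have ale : ∀ i j, i ≤ j → j ≤ 2*t → a i ≤ a j := by
    intro i j hij hj
    rcases eq_or_lt_of_le hij with rfl | h
    · exact le_refl _
    · exact (amono i j h hj).le
  have apos : ∀ i, i ≤ 2*t → a i ∈ Set.Icc (0:ℝ) 1 := by
    intro i hi
    constructor
    · rw [← ha0]; exact ale 0 i (by omega) hi
    · rw [← ha1]; exact ale i (2*t) hi le_rfl
  have pieceSub : ∀ i, i < 2*t → Set.Icc (a i) (a (i+1)) ⊆ Set.Icc (0:ℝ) 1 := by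
    intro i hi
    exact Set.Icc_subset_Icc (apos i (by omega)).1 (apos (i+1) (by omega)).2
  have gcontp : ∀ i, i < 2*t → ContinuousOn g (Set.Icc (a i) (a (i+1))) := by
    intro i hi
    exact gcont.mono (pieceSub i hi)
  -- values of g at breakpoints
  have gval : ∀ i, i ≤ 2*t → g (a i) = if i % 2 = 0 then 0 else 1 := by
    intro i
    induction i using Nat.strong_induction_on with
    | _ i ih =>
      match i with
      | 0 => intro _; simpa using hg0
      | 1 => intro _; simpa using hg1
      | (j+2) =>
        intro hj
        have h := gper j (by omega)
        have h2 := ih j (by omega) (by omega)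
        rw [← h, h2]
        have : (j+2) % 2 = j % 2 := by omega
        rw [this]
  -- covering [0,1] by pieces
  have cover : ∀ x : ℝ, x ∈ Set.Icc (0:ℝ) 1 →
      ∃ i, i < 2*t ∧ x ∈ Set.Icc (a i) (a (i+1)) := by
    have key : ∀ n, n ≤ 2*t → ∀ x : ℝ, a 0 ≤ x → x ≤ a n →
        ∃ i, i < max n 1 ∧ a i ≤ x ∧ x ≤ a (i+1) := by
      intro n
      induction n with
      | zero =>
        intro _ x hx0 hxn
        refine ⟨0, by omega, hx0, ?_⟩
        have hx : x = a 0 := le_antisymm hxn hx0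
        rw [hx]
        exact ale 0 1 (by omega) (by omega)
      | succ n ih =>
        intro hn x hx0 hxn
        by_cases hxa : x ≤ a n
        · obtain ⟨i, hi, h1, h2⟩ := ih (by omega) x hx0 hxa
          exact ⟨i, by omega, h1, h2⟩
        · exact ⟨n, by omega, (not_le.mp hxa).le, hxn⟩
    intro x hx
    obtain ⟨i, hi, h1, h2⟩ := key (2*t) le_rfl x (by rw [ha0]; exact hx.1)
      (by rw [ha1]; exact hx.2)
    refine ⟨i, by omega, h1, h2⟩
  -- g maps each piece into [0,1]
  have gmaps : ∀ i, i < 2*t → Set.MapsTo g (Set.Icc (a i) (a (i+1))) (Set.Icc (0:ℝ) 1) := by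
    intro i hi x hx
    have hle : a i ≤ a (i+1) := hx.1.trans hx.2
    have hv0 := gval i (by omega)
    have hv1 := gval (i+1) (by omega)
    rcases Nat.even_or_odd i with he | ho
    · have hmg := ((gmono0 i hi).1 he).monotoneOn
      have h1 : g (a i) ≤ g x := hmg (Set.left_mem_Icc.mpr hle) hx hx.1
      have h2 : g x ≤ g (a (i+1)) := hmg hx (Set.right_mem_Icc.mpr hle) hx.2
      have e0 : i % 2 = 0 := Nat.even_iff.mp he
      rw [if_pos e0] at hv0
      rw [if_neg (by omega)] at hv1
      exact ⟨hv0 ▸ h1, hv1 ▸ h2⟩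
    · have hmg := ((gmono0 i hi).2 ho).antitoneOn
      have h1 : g x ≤ g (a i) := hmg (Set.left_mem_Icc.mpr hle) hx hx.1
      have h2 : g (a (i+1)) ≤ g x := hmg hx (Set.right_mem_Icc.mpr hle) hx.2
      have e0 : i % 2 = 1 := Nat.odd_iff.mp ho
      rw [if_neg (by omega)] at hv0
      rw [if_pos (by omega)] at hv1
      exact ⟨hv1 ▸ h2, hv0 ▸ h1⟩
  -- g maps [0,1] into [0,1]
  have gmaps01 : Set.MapsTo g (Set.Icc (0:ℝ) 1) (Set.Icc (0:ℝ) 1) := by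
    intro x hx
    obtain ⟨i, hi, hxi⟩ := cover x hx
    exact gmaps i hi hxi
  -- existence of midpoints where g = b
  have hcex : ∀ i, i < 2*t → ∃ x, x ∈ Set.Ioo (a i) (a (i+1)) ∧ g x = b := by
    intro i hi
    have hlt : a i < a (i+1) := amono i (i+1) (by omega) (by omega)
    have hv0 := gval i (by omega)
    have hv1 := gval (i+1) (by omega)
    have hbIcc : b ∈ Set.Icc (0:ℝ) 1 := ⟨hb0.le, hb1.le⟩
    have hx : ∃ x ∈ Set.Icc (a i) (a (i+1)), g x = b := by
      rcases Nat.even_or_odd i with he | ho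
      · have e0 : i % 2 = 0 := Nat.even_iff.mp he
        rw [if_pos e0] at hv0; rw [if_neg (by omega)] at hv1
        have := intermediate_value_Icc hlt.le (gcontp i hi)
        have hb' : b ∈ Set.Icc (g (a i)) (g (a (i+1))) := by rw [hv0, hv1]; exact hbIcc
        obtain ⟨x, hx1, hx2⟩ := this hb'
        exact ⟨x, hx1, hx2⟩
      · have e0 : i % 2 = 1 := Nat.odd_iff.mp ho
        rw [if_neg (by omega)] at hv0; rw [if_pos (by omega)] at hv1
        have := intermediate_value_Icc' hlt.le (gcontp i hi)
        have hb' : b ∈ Set.Icc (g (a (i+1))) (g (a i)) := by rw [hv0, hv1]; exact hbIcc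
        obtain ⟨x, hx1, hx2⟩ := this hb'
        exact ⟨x, hx1, hx2⟩
    obtain ⟨x, hx1, hx2⟩ := hx
    refine ⟨x, ⟨?_, ?_⟩, hx2⟩
    · rcases eq_or_lt_of_le hx1.1 with h | h
      · exfalso
        rw [← h] at hx2
        rcases Nat.even_or_odd i with he | ho
        · rw [if_pos (Nat.even_iff.mp he)] at hv0; rw [hv0] at hx2; linarith
        · rw [if_neg (by have := Nat.odd_iff.mp ho; omega : ¬ i % 2 = 0)] at hv0; rw [hv0] at hx2; linarith
      · exact h
    · rcases eq_or_lt_of_le hx1.2 with h | h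
      · exfalso
        rw [h] at hx2
        rcases Nat.even_or_odd i with he | ho
        · rw [if_neg (by have := Nat.even_iff.mp he; omega : ¬ (i+1) % 2 = 0)] at hv1; rw [hv1] at hx2; linarith
        · rw [if_pos (by have := Nat.odd_iff.mp ho; omega : (i+1) % 2 = 0)] at hv1; rw [hv1] at hx2; linarith
      · exact h
  set c : ℕ → ℝ := fun i => if h : i < 2*t then (hcex i h).choose else 0 with hcdef
  have hcmem : ∀ i, (h : i < 2*t) → c i ∈ Set.Ioo (a i) (a (i+1)) := by
    intro i h
    simp only [hcdef, dif_pos h]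
    exact (hcex i h).choose_spec.1
  have hcval : ∀ i, (h : i < 2*t) → g (c i) = b := by
    intro i h
    simp only [hcdef, dif_pos h]
    exact (hcex i h).choose_spec.2
  -- the new breakpoint sequence
  set A : ℕ → ℝ := fun n => if n % 2 = 0 then a (n/2) else c (n/2) with hAdef
  have AE : ∀ m, A (2*m) = a m := by
    intro m
    simp only [hAdef]
    rw [if_pos (by omega)]
    congr 1
    omega
  have AO : ∀ m, A (2*m+1) = c m := by
    intro m
    simp only [hAdef]
    rw [if_neg (by omega)]
    congr 1
    omega
  -- adjacent increase
  have Aadj : ∀ n, n < 2*(2*t) → A n < A (n+1) := by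
    intro n hn
    rcases Nat.even_or_odd n with he | ho
    · obtain ⟨m, rfl⟩ := he
      have hm : m + m = 2*m := by omega
      rw [hm, AE, AO]
      exact (hcmem m (by omega)).1
    · obtain ⟨m, rfl⟩ := ho
      rw [AO, show 2*m+1+1 = 2*(m+1) by omega, AE]
      exact (hcmem m (by omega)).2
  -- values of f ∘ g at breakpoints
  have fgval : ∀ n, n ≤ 2*(2*t) → (f ∘ g) (A n) = if n % 2 = 0 then 0 else 1 := by
    intro n hn
    rcases Nat.even_or_odd n with he | ho
    · obtain ⟨m, rfl⟩ := he
      have hm : m + m = 2*m := by omega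
      rw [hm, AE, if_pos (by omega)]
      have := gval m (by omega)
      simp only [Function.comp_apply, this]
      split
      · exact hf00
      · exact hf10
    · obtain ⟨m, rfl⟩ := ho
      rw [AO, if_neg (by omega)]
      simp only [Function.comp_apply, hcval m (by omega)]
      exact hfb
  -- assemble
  refine ⟨by omega, fcont.comp gcont gmaps01, A, ?_, ?_, ?_, ?_, ?_, ?_, ?_⟩
  · show A 0 = 0
    rw [show (0:ℕ) = 2*0 by omega, AE, ha0]
  · show A (2*(2*t)) = 1
    rw [show 2*(2*t) = 2*(2*t) by rfl, AE, ha1]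
  · exact triangle_chain Aadj
  · intro i hi
    rw [fgval i (by omega), fgval (i+2) (by omega)]
    have h2 : (i+2) % 2 = i % 2 := by omega
    rw [h2]
  · rw [fgval 0 (by omega)]
    norm_num
  · rw [fgval 1 (by omega)]
    norm_num
  · intro i hi
    rcases Nat.even_or_odd i with hei | hoi
    · obtain ⟨m, rfl⟩ := hei
      have h2m : m + m = 2*m := by omega
      rw [h2m] at hi ⊢
      have hm : m < 2*t := by omega
      rw [AE, AO]
      have hcm := hcmem m hm
      have hsub : Set.Icc (a m) (c m) ⊆ Set.Icc (a m) (a (m+1)) :=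
        Set.Icc_subset_Icc le_rfl hcm.2.le
      have hamem : a m ∈ Set.Icc (a m) (a (m+1)) :=
        Set.left_mem_Icc.mpr (hcm.1.le.trans hcm.2.le)
      have hcmemI : c m ∈ Set.Icc (a m) (a (m+1)) := ⟨hcm.1.le, hcm.2.le⟩
      have hvm := gval m (by omega)
      constructor
      · intro _
        rcases Nat.even_or_odd m with hme | hmo
        · rw [if_pos (Nat.even_iff.mp hme)] at hvm
          have gm := ((gmono0 m hm).1 hme).mono hsub
          have gmono' := ((gmono0 m hm).1 hme).monotoneOn
          have maps : Set.MapsTo g (Set.Icc (a m) (c m)) (Set.Icc 0 b) := by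
            intro x hx
            refine ⟨?_, ?_⟩
            · rw [← hvm]; exact gmono' hamem (hsub hx) hx.1
            · rw [← hcval m hm]; exact gmono' (hsub hx) hcmemI hx.2
          exact fmono.comp gm maps
        · rw [if_neg (by have := Nat.odd_iff.mp hmo; omega)] at hvm
          have ga := ((gmono0 m hm).2 hmo).mono hsub
          have ganti := ((gmono0 m hm).2 hmo).antitoneOn
          have maps : Set.MapsTo g (Set.Icc (a m) (c m)) (Set.Icc b 1) := by
            intro x hx
            refine ⟨?_, ?_⟩
            · rw [← hcval m hm]; exact ganti (hsub hx) hcmemI hx.2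
            · rw [← hvm]; exact ganti hamem (hsub hx) hx.1
          exact fanti.comp ga maps
      · intro ho
        exact absurd (Nat.odd_iff.mp ho) (by omega)
    · obtain ⟨m, rfl⟩ := hoi
      have hm : m < 2*t := by omega
      rw [AO, show 2*m+1+1 = 2*(m+1) by omega, AE]
      have hcm := hcmem m hm
      have hsub : Set.Icc (c m) (a (m+1)) ⊆ Set.Icc (a m) (a (m+1)) :=
        Set.Icc_subset_Icc hcm.1.le le_rfl
      have ha1mem : a (m+1) ∈ Set.Icc (a m) (a (m+1)) :=
        Set.right_mem_Icc.mpr (hcm.1.le.trans hcm.2.le)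
      have hcmemI : c m ∈ Set.Icc (a m) (a (m+1)) := ⟨hcm.1.le, hcm.2.le⟩
      have hvm1 := gval (m+1) (by omega)
      constructor
      · intro he
        exact absurd (Nat.even_iff.mp he) (by omega)
      · intro _
        rcases Nat.even_or_odd m with hme | hmo
        · rw [if_neg (by have := Nat.even_iff.mp hme; omega)] at hvm1
          have gm := ((gmono0 m hm).1 hme).mono hsub
          have gmono' := ((gmono0 m hm).1 hme).monotoneOn
          have maps : Set.MapsTo g (Set.Icc (c m) (a (m+1))) (Set.Icc b 1) := by
            intro x hx
            refine ⟨?_, ?_⟩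
            · rw [← hcval m hm]; exact gmono' hcmemI (hsub hx) hx.1
            · rw [← hvm1]; exact gmono' (hsub hx) ha1mem hx.2
          exact fanti.comp_strictMonoOn gm maps
        · rw [if_pos (by have := Nat.odd_iff.mp hmo; omega)] at hvm1
          have ga := ((gmono0 m hm).2 hmo).mono hsub
          have ganti := ((gmono0 m hm).2 hmo).antitoneOn
          have maps : Set.MapsTo g (Set.Icc (c m) (a (m+1))) (Set.Icc 0 b) := by
            intro x hx
            refine ⟨?_, ?_⟩
            · rw [← hvm1]; exact ganti (hsub hx) ha1mem hx.2
            · rw [← hcval m hm]; exact ganti hcmemI (hsub hx) hx.1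
          exact fmono.comp_strictAntiOn ga maps

/-- Corollary 3.8: iterating a `(1,[0,1])`-triangle function `k` times yields a
`(2^(k-1),[0,1])`-triangle function. -/
theorem triangle_iterate (f : ℝ → ℝ) (hf : IsTriangle f 1) (k : ℕ) (hk : 1 ≤ k) :
    IsTriangle f^[k] (2 ^ (k - 1)) := by
  induction k with
  | zero => omega
  | succ k ih =>
    rcases Nat.eq_zero_or_pos k with rfl | hk0
    · simpa using hf
    · have IH := ih hk0
      rw [Function.iterate_succ']
      have h2 : 2 ^ (k + 1 - 1) = 2 * 2 ^ (k - 1) := by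
        rw [Nat.succ_sub_one, ← pow_succ']
        congr 1
        omega
      rw [h2]
      exact triangle_comp hf IH
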